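/- Let x^n be a sequence over the alphabet {1,…,k}, where k = max{x_1,…,x_n}, and let θ̂_M be the monotonic ML estimator, i.e., a maximizer of ∏_{i=1}^k φ_i^{n_x(i)} over monotonic probability vectors φ_1 ≥ … ≥ φ_k ≥ 0 with all components corresponding to occurring letters positive. Then the smallest component satisfies θ̂_{k,M} ≥ 1/(k·n). -/

import Mathlib

open Finset

/-- The number of occurrences of symbol `i` in the sequence `x` of length `n`. -/
def cnt (n : ℕ) (x : Fin n → ℕ) (i : ℕ) : ℕ :=
  (Finset.univ.filter fun t => x t = i).card

/-!
The monotonic distributions form a convex set containing the uniform distribution `u = 1/k`,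
so `L((1 - ε) θ + ε u) ≤ L(θ)` for the likelihood `L` and `ε ∈ (0, 1)`. Bounding every factor
but the `k`-th from below by `((1 - ε) θ_i)^{n_i}` and writing
`(1 - ε) θ_k + ε / k = θ_k (1 + ε (1 / (k θ_k) - 1))` turns this into
`(1 + ε (1 / (k θ_k) - 1))^{n_k} (1 - ε)^{n - n_k} ≤ 1`. The left side equals `1` at `ε = 0`, so
its right derivative there, `n_k / (k θ_k) - n`, is nonpositive: `θ_k ≥ n_k / (k n) ≥ 1 / (k n)`.
-/

open Filter Topology

theorem mul_le_of_forall_one_add_mul_pow_mul_one_sub_pow_le_one {m l : ℕ} {a : ℝ}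
    (h : ∀ ε ∈ Set.Ioo (0 : ℝ) 1, (1 + ε * a) ^ m * (1 - ε) ^ l ≤ 1) : m * a ≤ l := by
  set g : ℝ → ℝ := fun ε => (1 + ε * a) ^ m * (1 - ε) ^ l
  have hg : HasDerivAt g (m * a - l) 0 := by
    have h1 := (((hasDerivAt_id' (0 : ℝ)).mul_const a).const_add 1).fun_pow m
    have h2 := ((hasDerivAt_id' (0 : ℝ)).const_sub 1).fun_pow l
    exact (h1.fun_mul h2).congr_deriv (by simp; ring)
  have hslope : Tendsto (slope g 0) (𝓝[>] 0) (𝓝 (m * a - l)) :=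
    (hasDerivWithinAt_iff_tendsto_slope' Set.self_notMem_Ioi).mp hg.hasDerivWithinAt
  have hnonpos : ∀ᶠ ε in 𝓝[>] (0 : ℝ), slope g 0 ε ≤ 0 := by
    filter_upwards [Ioo_mem_nhdsGT one_pos] with ε hε
    rw [slope_def_field, sub_zero]
    exact div_nonpos_of_nonpos_of_nonneg (by simpa [g] using h ε hε) hε.1.le
  linarith [le_of_tendsto hslope hnonpos]

theorem pow_mul_prod_erase_le_prod {ι : Type*} [DecidableEq ι] {s : Finset ι} {j : ι}
    (hj : j ∈ s) (c : ι → ℕ) {θ φ : ι → ℝ} {a : ℝ} (ha : 0 ≤ a) (hθ : ∀ i ∈ s, 0 ≤ θ i)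
    (hφ : ∀ i ∈ s, a * θ i ≤ φ i) :
    φ j ^ c j * (a ^ (∑ i ∈ s.erase j, c i) * ∏ i ∈ s.erase j, θ i ^ c i) ≤
      ∏ i ∈ s, φ i ^ c i := by
  rw [← mul_prod_erase s _ hj, ← prod_pow_eq_pow_sum, ← prod_mul_distrib]
  have hφj : 0 ≤ φ j := (mul_nonneg ha (hθ j hj)).trans (hφ j hj)
  refine mul_le_mul_of_nonneg_left (prod_le_prod (fun i hi => ?_) fun i hi => ?_)
    (pow_nonneg hφj _)
  all_goals rw [← mul_pow]; have hθi := hθ i (mem_of_mem_erase hi)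
  · positivity
  · exact pow_le_pow_left₀ (mul_nonneg ha hθi) (hφ i (mem_of_mem_erase hi)) _

theorem sum_cnt_le (n : ℕ) (x : Fin n → ℕ) (s : Finset ℕ) : ∑ i ∈ s, cnt n x i ≤ n := by
  simpa [cnt, sum_card_fiberwise_eq_card_filter] using card_filter_le univ fun t => x t ∈ s

structure IsMonotoneDistrib (k : ℕ) (c : ℕ → ℕ) (φ : ℕ → ℝ) : Prop where
  succ_le : ∀ i ∈ Ico 1 k, φ (i + 1) ≤ φ i
  nonneg : ∀ i ∈ Icc 1 k, 0 ≤ φ i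
  pos_of_one_le_count : ∀ i ∈ Icc 1 k, 1 ≤ c i → 0 < φ i
  sum_eq_one : ∑ i ∈ Icc 1 k, φ i = 1

def likelihood (k : ℕ) (c : ℕ → ℕ) (φ : ℕ → ℝ) : ℝ := ∏ i ∈ Icc 1 k, φ i ^ c i

section

variable {k : ℕ} {c : ℕ → ℕ}

theorem convex_setOf_isMonotoneDistrib : Convex ℝ {φ | IsMonotoneDistrib k c φ} := by
  intro θ hθ ψ hψ a b ha hb hab
  refine ⟨fun i hi => ?_, fun i hi => ?_, fun i hi hci => ?_, ?_⟩ <;>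
    simp only [Pi.add_apply, Pi.smul_apply, smul_eq_mul]
  · gcongr
    exacts [hθ.succ_le i hi, hψ.succ_le i hi]
  · have := hθ.nonneg i hi
    have := hψ.nonneg i hi
    positivity
  · exact convex_Ioi (0 : ℝ) (hθ.pos_of_one_le_count i hi hci)
      (hψ.pos_of_one_le_count i hi hci) ha hb hab
  · rw [sum_add_distrib, ← mul_sum, ← mul_sum, hθ.sum_eq_one, hψ.sum_eq_one, mul_one, mul_one,
      hab]

theorem isMonotoneDistrib_uniform (hk : 0 < k) : IsMonotoneDistrib k c fun _ => (k : ℝ)⁻¹ where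
  succ_le _ _ := le_rfl
  nonneg _ _ := by positivity
  pos_of_one_le_count _ _ _ := by positivity
  sum_eq_one := by simp [hk.ne']

theorem IsMonotoneDistrib.one_add_mul_pow_mul_one_sub_pow_le_one {θ : ℕ → ℝ} (hk : 0 < k)
    (hck : 1 ≤ c k) (hθ : IsMonotoneDistrib k c θ)
    (hmax : IsMaxOn (likelihood k c) {φ | IsMonotoneDistrib k c φ} θ) {ε : ℝ}
    (hε : ε ∈ Set.Ioo 0 1) :
    (1 + ε * ((k * θ k)⁻¹ - 1)) ^ c k * (1 - ε) ^ (∑ i ∈ (Icc 1 k).erase k, c i) ≤ 1 := by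
  have hkk : k ∈ Icc 1 k := mem_Icc.2 ⟨hk, le_rfl⟩
  set t := θ k
  have ht : 0 < t := hθ.pos_of_one_le_count k hkk hck
  set P := ∏ i ∈ (Icc 1 k).erase k, θ i ^ c i
  have hP : 0 < P := by
    refine prod_pos fun i hi => ?_
    rcases Nat.eq_zero_or_pos (c i) with h0 | h1
    · simp [h0]
    · exact pow_pos (hθ.pos_of_one_le_count i (mem_of_mem_erase hi) h1) _
  set φ : ℕ → ℝ := (1 - ε) • θ + ε • fun _ => (k : ℝ)⁻¹
  have hφ : IsMonotoneDistrib k c φ := convex_setOf_isMonotoneDistrib hθ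
    (isMonotoneDistrib_uniform hk) (by linarith [hε.2]) hε.1.le (by ring)
  have hφk : φ k = t * (1 + ε * ((k * t)⁻¹ - 1)) := by
    simp only [φ, Pi.add_apply, Pi.smul_apply, smul_eq_mul]
    field_simp
    ring
  have hlow := pow_mul_prod_erase_le_prod hkk c (φ := φ) (a := 1 - ε) (by linarith [hε.2])
    hθ.nonneg fun i _ => by
      simp only [φ, Pi.add_apply, Pi.smul_apply, smul_eq_mul]
      have : 0 ≤ ε * (k : ℝ)⁻¹ := mul_nonneg hε.1.le (by positivity)
      linarith
  have hup : likelihood k c φ ≤ t ^ c k * P :=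
    (isMaxOn_iff.1 hmax φ hφ).trans_eq (mul_prod_erase _ _ hkk).symm
  rw [hφk, mul_pow] at hlow
  refine le_of_mul_le_mul_left ?_ (by positivity : 0 < t ^ c k * P)
  calc t ^ c k * P * ((1 + ε * ((k * t)⁻¹ - 1)) ^ c k * (1 - ε) ^ _)
      = t ^ c k * (1 + ε * ((k * t)⁻¹ - 1)) ^ c k * ((1 - ε) ^ _ * P) := by ring
    _ ≤ t ^ c k * P := hlow.trans hup
    _ = t ^ c k * P * 1 := (mul_one _).symm

theorem IsMonotoneDistrib.count_div_le_of_isMaxOn {θ : ℕ → ℝ} (hk : 0 < k) (hck : 1 ≤ c k)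
    (hθ : IsMonotoneDistrib k c θ)
    (hmax : IsMaxOn (likelihood k c) {φ | IsMonotoneDistrib k c φ} θ) :
    c k / (k * ∑ i ∈ Icc 1 k, (c i : ℝ)) ≤ θ k := by
  have hkk : k ∈ Icc 1 k := mem_Icc.2 ⟨hk, le_rfl⟩
  have ht : 0 < θ k := hθ.pos_of_one_le_count k hkk hck
  have hcount : (c k : ℝ) * ((k * θ k)⁻¹ - 1) ≤ ∑ i ∈ (Icc 1 k).erase k, c i :=
    mul_le_of_forall_one_add_mul_pow_mul_one_sub_pow_le_one fun _ hε =>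
      hθ.one_add_mul_pow_mul_one_sub_pow_le_one hk hck hmax hε
  have hN : ∑ i ∈ Icc 1 k, (c i : ℝ) = c k + ∑ i ∈ (Icc 1 k).erase k, c i := by
    rw [← add_sum_erase _ _ hkk, Nat.cast_sum]
  have hkt : (c k : ℝ) * (k * θ k)⁻¹ ≤ ∑ i ∈ Icc 1 k, (c i : ℝ) := by rw [hN]; linarith
  have hNpos : 0 < ∑ i ∈ Icc 1 k, (c i : ℝ) := by rw [hN]; positivity
  rw [mul_inv_le_iff₀ (by positivity)] at hkt
  rw [div_le_iff₀ (by positivity)]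
  linarith

end

theorem stmt_11_general (n k : ℕ) (hk : 0 < k) (x : Fin n → ℕ)
    (hxk : 1 ≤ cnt n x k)
    (θM : ℕ → ℝ)
    (hmono : ∀ i ∈ Finset.Ico 1 k, θM (i + 1) ≤ θM i)
    (hnn : ∀ i ∈ Finset.Icc 1 k, 0 ≤ θM i)
    (hposocc : ∀ i ∈ Finset.Icc 1 k, 1 ≤ cnt n x i → 0 < θM i)
    (hsum : ∑ i ∈ Finset.Icc 1 k, θM i = 1)
    (hmax : ∀ φ : ℕ → ℝ,
      (∀ i ∈ Finset.Ico 1 k, φ (i + 1) ≤ φ i) →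
      (∀ i ∈ Finset.Icc 1 k, 0 ≤ φ i) →
      (∀ i ∈ Finset.Icc 1 k, 1 ≤ cnt n x i → 0 < φ i) →
      (∑ i ∈ Finset.Icc 1 k, φ i = 1) →
      ∏ i ∈ Finset.Icc 1 k, φ i ^ cnt n x i ≤
        ∏ i ∈ Finset.Icc 1 k, θM i ^ cnt n x i) :
    1 / ((k : ℝ) * n) ≤ θM k := by
  have hθ : IsMonotoneDistrib k (cnt n x) θM := ⟨hmono, hnn, hposocc, hsum⟩
  have hbound := hθ.count_div_le_of_isMaxOn hk hxk <| isMaxOn_iff.2 fun φ hφ =>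
    hmax φ hφ.succ_le hφ.nonneg hφ.pos_of_one_le_count hφ.sum_eq_one
  have hN : ∑ i ∈ Icc 1 k, (cnt n x i : ℝ) ≤ n := by exact_mod_cast sum_cnt_le n x (Icc 1 k)
  have hN₀ : 0 < ∑ i ∈ Icc 1 k, (cnt n x i : ℝ) :=
    sum_pos' (fun i _ => by positivity) ⟨k, mem_Icc.2 ⟨hk, le_rfl⟩, by exact_mod_cast hxk⟩
  refine le_trans (div_le_div₀ (Nat.cast_nonneg _) (by exact_mod_cast hxk) ?_ ?_) hbound
  · positivity
  · gcongr

/-- Lemma 1: the smallest component of the monotonic ML estimator for a sequence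
over `{1,…,k}` (with `k` the maximal occurring symbol) is at least `1/(k·n)`. -/
theorem stmt_11 (n k : ℕ) (hn : 0 < n) (hk : 0 < k) (x : Fin n → ℕ)
    (hx : ∀ t, 1 ≤ x t ∧ x t ≤ k) (hxk : 1 ≤ cnt n x k)
    (θM : ℕ → ℝ)
    (hmono : ∀ i ∈ Finset.Ico 1 k, θM (i + 1) ≤ θM i)
    (hnn : ∀ i ∈ Finset.Icc 1 k, 0 ≤ θM i)
    (hposocc : ∀ i ∈ Finset.Icc 1 k, 1 ≤ cnt n x i → 0 < θM i)
    (hsum : ∑ i ∈ Finset.Icc 1 k, θM i = 1)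
    (hmax : ∀ φ : ℕ → ℝ,
      (∀ i ∈ Finset.Ico 1 k, φ (i + 1) ≤ φ i) →
      (∀ i ∈ Finset.Icc 1 k, 0 ≤ φ i) →
      (∀ i ∈ Finset.Icc 1 k, 1 ≤ cnt n x i → 0 < φ i) →
      (∑ i ∈ Finset.Icc 1 k, φ i = 1) →
      ∏ i ∈ Finset.Icc 1 k, φ i ^ cnt n x i ≤
        ∏ i ∈ Finset.Icc 1 k, θM i ^ cnt n x i) :
    1 / ((k : ℝ) * n) ≤ θM k :=
  stmt_11_general n k hk x hxk θM hmono hnn hposocc hsum hmax
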